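/- arXiv:2601.10643 — 11 statements merged into one kernel-verified Lean document; each statement's English description precedes it below -/
import Mathlib

section
/- For all real x ≥ 1 and all real a ≥ 0.627, the function f(x) = (1 - e^{-a x}) / ln(1 + x) is strictly decreasing in x; equivalently, its derivative is strictly negative on [1, ∞). -/
/-!
Clearing denominators, `f' < 0` on `(1, ∞)` amounts to
`a (1 + x) log (1 + x) < e^{a x} - 1`. Tangent-line concavity of `log` at `2` gives
`log (1 + x) ≤ log 2 + (x - 1) / 2`, the degree-four Taylor polynomial bounds `e^{a x}` from below,
and since its coefficients after dividing by `a` grow with `a` it suffices to compare polynomials at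
`a = 0.627`, where the margin at `x = 1` is about `0.003`.
-/

open Real

lemma log_le_log_two_add {y : ℝ} (hy : 0 < y) : log y ≤ log 2 + (y / 2 - 1) := by
  have h := log_le_sub_one_of_pos (half_pos hy)
  rwa [log_div hy.ne' two_ne_zero, sub_le_iff_le_add'] at h

lemma taylor_four_le_exp {t : ℝ} (ht : 0 ≤ t) :
    1 + t + t ^ 2 / 2 + t ^ 3 / 6 + t ^ 4 / 24 ≤ exp t := by
  have h := sum_le_exp_of_nonneg ht 5
  norm_num [Finset.sum_range_succ, Nat.factorial] at h
  linarith

lemma one_add_mul_log_bound_lt_taylor_bound {x : ℝ} (hx : 1 ≤ x) :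
    (1 + x) * (0.6931471808 + (x - 1) / 2)
      < x + 0.627 * x ^ 2 / 2 + 0.627 ^ 2 * x ^ 3 / 6 + 0.627 ^ 3 * x ^ 4 / 24 := by
  have hy : 0 ≤ x - 1 := by linarith
  nlinarith [sq_nonneg (x - 1), mul_nonneg (mul_nonneg hy hy) hy,
    mul_nonneg (mul_nonneg (mul_nonneg hy hy) hy) hy]

lemma mul_one_add_mul_log_lt_exp_sub_one {a x : ℝ} (ha : 0.627 ≤ a) (hx : 1 ≤ x) :
    a * (1 + x) * log (1 + x) < exp (a * x) - 1 := by
  have ha₀ : 0 < a := lt_of_lt_of_le (by norm_num) ha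
  have hx₀ : 0 ≤ x := by linarith
  have hlog : log (1 + x) ≤ 0.6931471808 + (x - 1) / 2 := by
    have := log_le_log_two_add (y := 1 + x) (by linarith)
    linarith [log_two_lt_d9]
  calc a * (1 + x) * log (1 + x)
      ≤ a * ((1 + x) * (0.6931471808 + (x - 1) / 2)) := by
        rw [mul_assoc]; gcongr
    _ < a * (x + 0.627 * x ^ 2 / 2 + 0.627 ^ 2 * x ^ 3 / 6 + 0.627 ^ 3 * x ^ 4 / 24) := by
        gcongr; exact one_add_mul_log_bound_lt_taylor_bound hx
    _ ≤ a * (x + a * x ^ 2 / 2 + a ^ 2 * x ^ 3 / 6 + a ^ 3 * x ^ 4 / 24) := by gcongr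
    _ = a * x + (a * x) ^ 2 / 2 + (a * x) ^ 3 / 6 + (a * x) ^ 4 / 24 := by ring
    _ ≤ exp (a * x) - 1 := by linarith [taylor_four_le_exp (mul_nonneg ha₀.le hx₀)]

lemma hasDerivAt_one_sub_exp_div_log (a : ℝ) {x : ℝ} (hx : 0 < x) :
    HasDerivAt (fun x : ℝ => (1 - exp (-a * x)) / log (1 + x))
      ((a * exp (-a * x) * log (1 + x) - (1 - exp (-a * x)) * (1 + x)⁻¹) / log (1 + x) ^ 2) x := by
  have hnum : HasDerivAt (fun x : ℝ => 1 - exp (-a * x)) (a * exp (-a * x)) x :=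
    ((((hasDerivAt_id' x).const_mul (-a)).exp).const_sub 1).congr_deriv (by ring)
  have hden : HasDerivAt (fun x : ℝ => log (1 + x)) (1 + x)⁻¹ x := by
    simpa using ((hasDerivAt_id' x).const_add 1).log (by linarith)
  exact hnum.div hden (log_pos (by linarith)).ne'

theorem stmt_0 (a : ℝ) (ha : 0.627 ≤ a) :
    StrictAntiOn (fun x : ℝ => (1 - Real.exp (-a * x)) / Real.log (1 + x))
      (Set.Ici 1) := by
  refine strictAntiOn_of_deriv_neg (convex_Ici 1) (fun x hx => ?_) fun x hx => ?_
  · have hx : (1 : ℝ) ≤ x := hx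
    exact (hasDerivAt_one_sub_exp_div_log a (by linarith)).continuousAt.continuousWithinAt
  rw [interior_Ici, Set.mem_Ioi] at hx
  rw [(hasDerivAt_one_sub_exp_div_log a (by linarith)).deriv]
  refine div_neg_of_neg_of_pos ?_ (pow_pos (log_pos (by linarith)) 2)
  rw [sub_neg, ← div_eq_mul_inv, lt_div_iff₀ (by linarith)]
  calc a * exp (-a * x) * log (1 + x) * (1 + x)
      = exp (-a * x) * (a * (1 + x) * log (1 + x)) := by ring
    _ < exp (-a * x) * (exp (a * x) - 1) :=
        mul_lt_mul_of_pos_left (mul_one_add_mul_log_lt_exp_sub_one ha hx.le) (exp_pos _)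
    _ = 1 - exp (-a * x) := by rw [mul_sub, ← exp_add]; simp
end

section
/- For all real a ≥ 0.627 and all real x ≥ 1, the quantity φ(x) = e^{a x} - 1 - a (1 + x) ln(1 + x) is strictly positive. -/
lemma poly_aux (a x : ℝ) (ha : 0.627 ≤ a) (hx : 1 ≤ x) :
    (1 + x) * (0.6931471808 + (x - 1) / 2) <
      x + a * x ^ 2 / 2 + a ^ 2 * x ^ 3 / 6 + a ^ 3 * x ^ 4 / 24 := by
  have h1 : (0.627 : ℝ) * x ^ 2 / 2 ≤ a * x ^ 2 / 2 := by nlinarith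
  have ha2 : (0.627 : ℝ) ^ 2 ≤ a ^ 2 := pow_le_pow_left₀ (by norm_num) ha 2
  have ha3 : (0.627 : ℝ) ^ 3 ≤ a ^ 3 := pow_le_pow_left₀ (by norm_num) ha 3
  have hx3 : (0:ℝ) ≤ x ^ 3 := by positivity
  have hx4 : (0:ℝ) ≤ x ^ 4 := by positivity
  have h2 : (0.627 : ℝ) ^ 2 * x ^ 3 / 6 ≤ a ^ 2 * x ^ 3 / 6 := by
    nlinarith [mul_le_mul_of_nonneg_right ha2 hx3]
  have h3 : (0.627 : ℝ) ^ 3 * x ^ 4 / 24 ≤ a ^ 3 * x ^ 4 / 24 := by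
    nlinarith [mul_le_mul_of_nonneg_right ha3 hx4]
  have key : (1 + x) * (0.6931471808 + (x - 1) / 2) <
      x + 0.627 * x ^ 2 / 2 + 0.627 ^ 2 * x ^ 3 / 6 + 0.627 ^ 3 * x ^ 4 / 24 := by
    nlinarith [sq_nonneg (x - 1), sq_nonneg x, mul_nonneg (sq_nonneg (x-1)) (sub_nonneg.2 hx),
      mul_nonneg (mul_nonneg (sub_nonneg.2 hx) (sub_nonneg.2 hx)) (sub_nonneg.2 hx),
      sq_nonneg ((x-1)*(x-1))]
  linarith

theorem stmt_1 (a x : ℝ) (ha : 0.627 ≤ a) (hx : 1 ≤ x) :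
    0 < Real.exp (a * x) - 1 - a * (1 + x) * Real.log (1 + x) := by
  have ha0 : (0:ℝ) < a := by norm_num at ha ⊢; linarith
  have hx0 : (0:ℝ) ≤ a * x := by positivity
  have hexp := Real.sum_le_exp_of_nonneg hx0 5
  simp [Finset.sum_range_succ] at hexp
  norm_num [Nat.factorial] at hexp
  have hlog : Real.log (1 + x) ≤ Real.log 2 + (x - 1) / 2 := by
    have h1 : Real.log ((1 + x) / 2) ≤ (1 + x) / 2 - 1 :=
      Real.log_le_sub_one_of_pos (by linarith)
    have h2 : Real.log ((1 + x) / 2) = Real.log (1 + x) - Real.log 2 :=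
      Real.log_div (by linarith) two_ne_zero
    linarith
  have hl2 : Real.log 2 < 0.6931471808 := Real.log_two_lt_d9
  have hlog' : Real.log (1 + x) < 0.6931471808 + (x - 1) / 2 := by linarith
  have hp : a * ((1 + x) * Real.log (1 + x)) <
      a * ((1 + x) * (0.6931471808 + (x - 1) / 2)) := by
    apply mul_lt_mul_of_pos_left _ ha0
    apply mul_lt_mul_of_pos_left hlog' (by linarith)
  have hpoly := poly_aux a x ha hx
  have hmul : a * ((1 + x) * (0.6931471808 + (x - 1) / 2)) <
      a * (x + a * x ^ 2 / 2 + a ^ 2 * x ^ 3 / 6 + a ^ 3 * x ^ 4 / 24) :=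
    mul_lt_mul_of_pos_left hpoly ha0
  have hfact : a * (x + a * x ^ 2 / 2 + a ^ 2 * x ^ 3 / 6 + a ^ 3 * x ^ 4 / 24) =
      a * x + (a * x) ^ 2 / 2 + (a * x) ^ 3 / 6 + (a * x) ^ 4 / 24 := by ring
  nlinarith [hexp, hp, hmul, hfact]
end

section
/- For all real a ≥ 0.2448 and all real x ≥ 6, the quantity φ(x) = e^{a x} - 1 - a (1 + x)(ln(1 + x) + 0.005) is strictly positive. -/
theorem stmt_3 (a x : ℝ) (ha : 0.2448 ≤ a) (hx : 6 ≤ x) :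
    0 < Real.exp (a * x) - 1 - a * (1 + x) * (Real.log (1 + x) + 0.005) := by
  have ha0 : (0:ℝ) < a := by norm_num at ha ⊢; linarith
  have hx1 : (0:ℝ) < 1 + x := by linarith
  have ht : (1.4688:ℝ) ≤ a * x := by nlinarith
  -- log 7 < 1.94593
  have hexp9 : Real.exp 0.94593 ≥ 2.5752 := by
    have h := Real.sum_le_exp_of_nonneg (show (0:ℝ) ≤ 0.94593 by norm_num) 12
    simp [Finset.sum_range_succ, Nat.factorial] at h
    norm_num at h
    linarith
  have hlog7 : Real.log 7 < 1.94593 := by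
    rw [Real.log_lt_iff_lt_exp (by norm_num)]
    have : Real.exp 1.94593 = Real.exp 1 * Real.exp 0.94593 := by
      rw [← Real.exp_add]; norm_num
    rw [this]
    nlinarith [Real.exp_one_gt_d9, Real.exp_pos (1:ℝ)]
  -- log (1+x) bound
  have hlx : Real.log (1 + x) ≤ 0.94593 + (1 + x) / 7 := by
    have h1 : Real.log (1 + x) = Real.log 7 + Real.log ((1 + x) / 7) := by
      rw [← Real.log_mul (by norm_num) (by positivity)]
      ring_nf
    have h2 := Real.log_le_sub_one_of_pos (show (0:ℝ) < (1 + x) / 7 by positivity)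
    linarith
  -- RHS quadratic bound in t = a*x
  have hB : a * (1 + x) * (Real.log (1 + x) + 0.005) ≤
      a * (1 + x) * (0.95093 + (1 + x) / 7) := by
    have : (0:ℝ) ≤ a * (1 + x) := by positivity
    nlinarith
  have hC : a * (1 + x) * (0.95093 + (1 + x) / 7) ≤
      (665651/600000) * (a * x) + (4375/5508) * (a * x) ^ 2 := by
    nlinarith [mul_nonneg ha0.le (show (0:ℝ) ≤ x - 6 by linarith),
      mul_nonneg (mul_nonneg ha0.le ha0.le) (sq_nonneg x),
      mul_nonneg (show (0:ℝ) ≤ a - 0.2448 by linarith) (sq_nonneg x),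
      mul_nonneg (mul_nonneg ha0.le (show (0:ℝ) ≤ a - 0.2448 by linarith)) (sq_nonneg x),
      mul_nonneg (mul_nonneg ha0.le (show (0:ℝ) ≤ x - 6 by linarith)) (show (0:ℝ) ≤ x + 1 by linarith)]
  -- Taylor lower bound for exp
  have hexp : 1 + (a*x) + (a*x)^2/2 + (a*x)^3/6 + (a*x)^4/24 + (a*x)^5/120
      + (a*x)^6/720 + (a*x)^7/5040 ≤ Real.exp (a * x) := by
    have h := Real.sum_le_exp_of_nonneg (show (0:ℝ) ≤ a * x by positivity) 8
    simp [Finset.sum_range_succ, Nat.factorial] at h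
    linarith
  -- final polynomial inequality in t
  have hs : (0:ℝ) ≤ a * x - 1.4688 := by linarith
  have hpoly : 0 < 1 + (a*x) + (a*x)^2/2 + (a*x)^3/6 + (a*x)^4/24 + (a*x)^5/120
      + (a*x)^6/720 + (a*x)^7/5040 - 1
      - ((665651/600000) * (a * x) + (4375/5508) * (a * x) ^ 2) := by
    nlinarith [hs, pow_nonneg hs 2, pow_nonneg hs 3, pow_nonneg hs 4,
      pow_nonneg hs 5, pow_nonneg hs 6, pow_nonneg hs 7]
  linarith
end

section
/- Let m' and M be integers with 1 ≤ m' and m' + 1 < M. Then the function f(x) = (x^{m'+1} - x^M) / (1 - x^{M-1}) is strictly increasing on the open interval (0, 1). -/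
/-!
Dividing numerator and denominator by `1 - x`, the function becomes `x * T x / (H x + T x)` with
`H x = ∑_{i < m'} x^i` and `T x = ∑_{m' ≤ j < M - 1} x^j`. Comparing the double sums
`H y * T x` and `H x * T y` term by term (`y^i x^j ≤ x^i y^j` for `i < j`, `x ≤ y`) shows that
`T / (H + T)` is monotone, so multiplying by the strictly increasing factor `x` gives the claim.
-/

open Finset Set

section OrderedSemiring

variable {R : Type*} [CommSemiring R] [PartialOrder R] [IsOrderedRing R] {x y : R}

theorem pow_mul_pow_le_pow_mul_pow (hx : 0 ≤ x) (hxy : x ≤ y) {i j : ℕ} (hij : i ≤ j) :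
    y ^ i * x ^ j ≤ x ^ i * y ^ j := by
  obtain ⟨k, rfl⟩ := Nat.exists_eq_add_of_le hij
  calc y ^ i * x ^ (i + k) = x ^ i * y ^ i * x ^ k := by ring
    _ ≤ x ^ i * y ^ i * y ^ k := by
      have hy : 0 ≤ y := hx.trans hxy
      gcongr
    _ = x ^ i * y ^ (i + k) := by ring

theorem geom_sum_range_mul_geom_sum_Ico_le (hx : 0 ≤ x) (hxy : x ≤ y) (m n : ℕ) :
    (∑ i ∈ range m, y ^ i) * ∑ j ∈ Ico m n, x ^ j ≤
      (∑ i ∈ range m, x ^ i) * ∑ j ∈ Ico m n, y ^ j := by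
  simp only [sum_mul_sum]
  refine sum_le_sum fun i hi => sum_le_sum fun j hj => ?_
  exact pow_mul_pow_le_pow_mul_pow hx hxy ((mem_range.1 hi).le.trans (mem_Ico.1 hj).1)

end OrderedSemiring

theorem monotoneOn_geom_sum_Ico_div_geom_sum_range {m n : ℕ} (hmn : m ≤ n) (hn : 0 < n) :
    MonotoneOn (fun x : ℝ => (∑ j ∈ Ico m n, x ^ j) / ∑ i ∈ range n, x ^ i) (Ici 0) := by
  intro x hx y _ hxy
  have hx : 0 ≤ x := hx
  have hpos : ∀ z : ℝ, 0 ≤ z → 0 < ∑ i ∈ range n, z ^ i := fun z hz =>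
    sum_pos' (fun i _ => pow_nonneg hz i) ⟨0, mem_range.2 hn, by simp⟩
  rw [div_le_div_iff₀ (hpos x hx) (hpos y (hx.trans hxy)), ← sum_range_add_sum_Ico _ hmn,
    ← sum_range_add_sum_Ico _ hmn]
  linear_combination geom_sum_range_mul_geom_sum_Ico_le hx hxy m n

theorem strictMonoOn_mul_geom_sum_Ico_div_geom_sum_range {m n : ℕ} (hmn : m < n) :
    StrictMonoOn (fun x : ℝ => x * ((∑ j ∈ Ico m n, x ^ j) / ∑ i ∈ range n, x ^ i))
      (Ioi 0) := by
  intro x hx y hy hxy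
  have hx : 0 < x := hx
  have hy : 0 < y := hy
  have hratio_pos : 0 < (∑ j ∈ Ico m n, x ^ j) / ∑ i ∈ range n, x ^ i :=
    div_pos (sum_pos (fun j _ => pow_pos hx j) (nonempty_Ico.2 hmn))
      (sum_pos (fun i _ => pow_pos hx i) (nonempty_range_iff.2 (by omega)))
  calc x * ((∑ j ∈ Ico m n, x ^ j) / ∑ i ∈ range n, x ^ i)
      < y * ((∑ j ∈ Ico m n, x ^ j) / ∑ i ∈ range n, x ^ i) := by gcongr
    _ ≤ y * ((∑ j ∈ Ico m n, y ^ j) / ∑ i ∈ range n, y ^ i) :=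
      mul_le_mul_of_nonneg_left (monotoneOn_geom_sum_Ico_div_geom_sum_range hmn.le
        (by omega) hx.le hy.le hxy.le) hy.le

theorem pow_sub_pow_div_one_sub_pow_eq {x : ℝ} (hx : x ≠ 1) {m n : ℕ} (hmn : m ≤ n) :
    (x ^ (m + 1) - x ^ (n + 1)) / (1 - x ^ n) =
      x * ((∑ j ∈ Ico m n, x ^ j) / ∑ i ∈ range n, x ^ i) := by
  have hnum : x ^ (m + 1) - x ^ (n + 1) = x * (∑ j ∈ Ico m n, x ^ j) * (1 - x) := by
    linear_combination x * geom_sum_Ico_mul x hmn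
  have hden : 1 - x ^ n = (∑ i ∈ range n, x ^ i) * (1 - x) := by
    linear_combination geom_sum_mul x n
  rw [hnum, hden, mul_div_mul_right _ _ (sub_ne_zero.2 hx.symm), mul_div_assoc]

theorem stmt_4_general (m' M : ℕ) (hM : m' + 1 < M) :
    StrictMonoOn (fun x : ℝ => (x ^ (m' + 1) - x ^ M) / (1 - x ^ (M - 1)))
      (Set.Ioo 0 1) := by
  obtain ⟨n, rfl⟩ : ∃ n, M = n + 1 := ⟨M - 1, by omega⟩
  refine ((strictMonoOn_mul_geom_sum_Ico_div_geom_sum_range (m := m') (n := n) (by omega)).mono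
    Ioo_subset_Ioi_self).congr fun x hx => ?_
  simp only [Nat.add_sub_cancel]
  exact (pow_sub_pow_div_one_sub_pow_eq hx.2.ne (by omega)).symm

theorem stmt_4 (m' M : ℕ) (hm : 1 ≤ m') (hM : m' + 1 < M) :
    StrictMonoOn (fun x : ℝ => (x ^ (m' + 1) - x ^ M) / (1 - x ^ (M - 1)))
      (Set.Ioo 0 1) :=
  stmt_4_general m' M hM
end

section
/- Let N > 1 and M > 2 be integers, and define f(m') = (m'+1)(N^{M-m'-1} - 1) - (M N / (M + N - 1)) (N^{M-1} - 1) for integers m' with 1 ≤ m' ≤ M - 2. Then f is strictly decreasing in m' (i.e., f(m'+1) < f(m') whenever both are defined) and f(m') < 0 for all m' in [1, M-2]. -/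
/-!
Write `c = M N / (M + N - 1)`; then `c > 1` because `M N - (M + N - 1) = (M - 1)(N - 1) > 0`.
Monotonicity: passing from `m'` to `m' + 1` lowers the exponent by one, and since `N ≥ 2`,
`(m' + 1)(N^{a+1} - 1) ≥ (m' + 1)(N^a - 1) + (m' + 1) N^a > (m' + 2)(N^a - 1)`.
Negativity: with `k = M - m' - 1`, Bernoulli gives `m' + 1 ≤ N^{m'}`, hence
`(m' + 1)(N^k - 1) ≤ N^{m'+k} - N^{m'} < N^{M-1} - 1 < c (N^{M-1} - 1)`.
-/

section OrderedField

variable {K : Type*} [Field K] [LinearOrder K] [IsStrictOrderedRing K]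

theorem one_lt_mul_div_add_sub_one {x y : K} (hx : 1 < x) (hy : 1 < y) :
    1 < x * y / (x + y - 1) := by
  rw [one_lt_div (by linarith)]
  nlinarith [mul_pos (sub_pos.2 hx) (sub_pos.2 hy)]

end OrderedField

section OrderedRing

variable {R : Type*} [CommRing R] [LinearOrder R] [IsStrictOrderedRing R] {x : R}

theorem add_one_le_pow_of_two_le (hx : 2 ≤ x) (n : ℕ) : (n : R) + 1 ≤ x ^ n := by
  have h := one_add_mul_le_pow (a := x - 1) (by linarith) n
  rw [add_sub_cancel] at h
  nlinarith [(Nat.cast_nonneg n : (0 : R) ≤ n)]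

theorem add_one_mul_pow_sub_one_lt (hx : 2 ≤ x) {k : R} (hk : 1 ≤ k) (n : ℕ) :
    (k + 1) * (x ^ n - 1) < k * (x ^ (n + 1) - 1) := by
  have hpow : 1 ≤ x ^ n := one_le_pow₀ (by linarith)
  have hdouble : 2 * x ^ n ≤ x ^ (n + 1) := by
    rw [pow_succ']
    exact mul_le_mul_of_nonneg_right hx (by linarith)
  nlinarith

theorem add_one_mul_pow_sub_one_lt_pow_add_sub_one (hx : 2 ≤ x) {m : ℕ} (hm : m ≠ 0) (k : ℕ) :
    ((m : R) + 1) * (x ^ k - 1) < x ^ (m + k) - 1 := by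
  have hpow_k : 1 ≤ x ^ k := one_le_pow₀ (by linarith)
  have hpow_m : 1 < x ^ m := one_lt_pow₀ (by linarith) hm
  calc ((m : R) + 1) * (x ^ k - 1) ≤ x ^ m * (x ^ k - 1) :=
        mul_le_mul_of_nonneg_right (add_one_le_pow_of_two_le hx m) (by linarith)
    _ = x ^ (m + k) - x ^ m := by ring
    _ < x ^ (m + k) - 1 := by linarith

end OrderedRing

theorem stmt_7_general (N M : ℕ) (hN : 1 < N) :
    (∀ m' : ℕ, 1 ≤ m' → m' + 1 ≤ M - 2 →
      ((m' + 1 : ℕ) + 1 : ℝ) * ((N : ℝ) ^ (M - (m' + 1) - 1) - 1) -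
          ((M : ℝ) * N / ((M : ℝ) + N - 1)) * ((N : ℝ) ^ (M - 1) - 1) <
        ((m' : ℝ) + 1) * ((N : ℝ) ^ (M - m' - 1) - 1) -
          ((M : ℝ) * N / ((M : ℝ) + N - 1)) * ((N : ℝ) ^ (M - 1) - 1)) ∧
    (∀ m' : ℕ, 1 ≤ m' → m' ≤ M - 2 →
      ((m' : ℝ) + 1) * ((N : ℝ) ^ (M - m' - 1) - 1) -
          ((M : ℝ) * N / ((M : ℝ) + N - 1)) * ((N : ℝ) ^ (M - 1) - 1) < 0) := by
  have hN2 : (2 : ℝ) ≤ N := by exact_mod_cast hN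
  refine ⟨fun m' hm' hle => sub_lt_sub_right ?_ _, fun m' hm' hle => ?_⟩
  · rw [show M - m' - 1 = M - (m' + 1) - 1 + 1 by omega]
    have hk : (1 : ℝ) ≤ ((m' + 1 : ℕ) : ℝ) := by exact_mod_cast Nat.le_add_left 1 m'
    simpa using add_one_mul_pow_sub_one_lt hN2 hk (M - (m' + 1) - 1)
  · have hc : 1 < (M : ℝ) * N / ((M : ℝ) + N - 1) :=
      one_lt_mul_div_add_sub_one (by exact_mod_cast (by omega : 1 < M)) (by exact_mod_cast hN)
    rw [sub_neg, show M - 1 = m' + (M - m' - 1) by omega]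
    have hpos : (0 : ℝ) < (N : ℝ) ^ (m' + (M - m' - 1)) - 1 :=
      sub_pos.2 (one_lt_pow₀ (by exact_mod_cast hN) (by omega))
    exact (add_one_mul_pow_sub_one_lt_pow_add_sub_one hN2 (by omega) _).trans
      (lt_mul_of_one_lt_left hpos hc)

theorem stmt_7 (N M : ℕ) (hN : 1 < N) (hM : 2 < M) :
    (∀ m' : ℕ, 1 ≤ m' → m' + 1 ≤ M - 2 →
      ((m' + 1 : ℕ) + 1 : ℝ) * ((N : ℝ) ^ (M - (m' + 1) - 1) - 1) -
          ((M : ℝ) * N / ((M : ℝ) + N - 1)) * ((N : ℝ) ^ (M - 1) - 1) <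
        ((m' : ℝ) + 1) * ((N : ℝ) ^ (M - m' - 1) - 1) -
          ((M : ℝ) * N / ((M : ℝ) + N - 1)) * ((N : ℝ) ^ (M - 1) - 1)) ∧
    (∀ m' : ℕ, 1 ≤ m' → m' ≤ M - 2 →
      ((m' : ℝ) + 1) * ((N : ℝ) ^ (M - m' - 1) - 1) -
          ((M : ℝ) * N / ((M : ℝ) + N - 1)) * ((N : ℝ) ^ (M - 1) - 1) < 0) :=
  stmt_7_general N M hN
end

section
/- Let y₀ = 25/17 and let m ≥ 3 be an integer. Then ((m+2)/(m+1+y₀)) · (y₀^{m+1}/(m+1)) > 1. -/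
lemma aux_pow_lb (m : ℕ) (hm : 4 ≤ m) :
    ((m : ℝ) + 1 + 25 / 17) < (25 / 17 : ℝ) ^ (m + 1) := by
  induction m, hm using Nat.le_induction with
  | base => norm_num
  | succ n hn ih =>
    have hn' : (4 : ℝ) ≤ n := by exact_mod_cast hn
    have h : (25 / 17 : ℝ) ^ (n + 1 + 1) = 25 / 17 * (25 / 17) ^ (n + 1) := by ring
    push_cast
    rw [h]
    nlinarith [ih]

theorem stmt_10 (m : ℕ) (hm : 3 ≤ m) :
    ((m : ℝ) + 2) / ((m : ℝ) + 1 + 25 / 17) * ((25 / 17 : ℝ) ^ (m + 1) / ((m : ℝ) + 1))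
      > 1 := by
  rcases eq_or_lt_of_le hm with h3 | h4
  · rw [← h3]
    norm_num
  · have hm4 : 4 ≤ m := h4
    have hx := aux_pow_lb m hm4
    have hmr : (4 : ℝ) ≤ m := by exact_mod_cast hm4
    have hd1 : (0 : ℝ) < (m : ℝ) + 1 + 25 / 17 := by linarith
    have hd2 : (0 : ℝ) < (m : ℝ) + 1 := by linarith
    rw [div_mul_div_comm, gt_iff_lt, lt_div_iff₀ (by positivity)]
    nlinarith [hx]
end

section
/- Let M ≥ 3 and m with 1 ≤ m ≤ M - 2 be integers, and let y > 1 be real. Define ρ(M, m, y) = (1/(m+1)) · (M y/(M + y - 1)) · ((y^{M-1} - 1)/(y^{M-m-1} - 1)). Then ρ(M, m, y) is strictly increasing in y on (1, ∞). -/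
open Finset

lemma term_lt {x y : ℝ} (hx : 1 < x) (hxy : x < y) {p j : ℕ} (hj : j < p) :
    x ^ p * y ^ j < y ^ p * x ^ j := by
  have hx0 : (0:ℝ) < x := lt_trans one_pos hx
  have hy0 : (0:ℝ) < y := lt_trans hx0 hxy
  have hp : p = j + (p - j) := by omega
  have hd : x ^ (p - j) < y ^ (p - j) :=
    pow_lt_pow_left₀ hxy (le_of_lt hx0) (by omega)
  rw [hp, pow_add, pow_add]
  have hpos : (0:ℝ) < x ^ j * y ^ j := by positivity
  nlinarith [mul_lt_mul_of_pos_left hd hpos, pow_pos hx0 j, pow_pos hy0 j]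

lemma core_sum {x y : ℝ} (hx : 1 < x) (hxy : x < y) {a k : ℕ} (ha : 1 ≤ a) (hk : 1 ≤ k) :
    (∑ i ∈ range k, x ^ (a + i)) * (∑ j ∈ range a, y ^ j) <
      (∑ i ∈ range k, y ^ (a + i)) * (∑ j ∈ range a, x ^ j) := by
  rw [sum_mul, sum_mul]
  apply Finset.sum_lt_sum_of_nonempty (by simp; omega)
  intro i _
  rw [mul_sum, mul_sum]
  apply Finset.sum_lt_sum_of_nonempty (by simp; omega)
  intro j hj
  simp only [mem_range] at hj
  exact term_lt hx hxy (by omega)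

lemma ratio_lt {x y : ℝ} (hx : 1 < x) (hxy : x < y) {a k : ℕ} (ha : 1 ≤ a) (hk : 1 ≤ k) :
    (x ^ (a + k) - 1) / (x ^ a - 1) < (y ^ (a + k) - 1) / (y ^ a - 1) := by
  have hy : 1 < y := hx.trans hxy
  have hxa : (0:ℝ) < x ^ a - 1 := sub_pos.2 (one_lt_pow₀ hx (by omega))
  have hya : (0:ℝ) < y ^ a - 1 := sub_pos.2 (one_lt_pow₀ hy (by omega))
  rw [div_lt_div_iff₀ hxa hya]
  have hx1 : (0:ℝ) < x - 1 := sub_pos.2 hx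
  have hy1 : (0:ℝ) < y - 1 := sub_pos.2 hy
  have key : (∑ i ∈ range (a+k), x ^ i) * (∑ j ∈ range a, y ^ j) <
      (∑ i ∈ range (a+k), y ^ i) * (∑ j ∈ range a, x ^ j) := by
    rw [Finset.sum_range_add, Finset.sum_range_add, add_mul, add_mul]
    have hc := core_sum hx hxy ha hk
    have := mul_comm (∑ j ∈ range a, x ^ j) (∑ j ∈ range a, y ^ j)
    nlinarith [hc]
  have ex : x ^ (a+k) - 1 = (∑ i ∈ range (a+k), x ^ i) * (x - 1) := (geom_sum_mul x (a+k)).symm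
  have ey : y ^ (a+k) - 1 = (∑ i ∈ range (a+k), y ^ i) * (y - 1) := (geom_sum_mul y (a+k)).symm
  have exa : x ^ a - 1 = (∑ i ∈ range a, x ^ i) * (x - 1) := (geom_sum_mul x a).symm
  have eya : y ^ a - 1 = (∑ i ∈ range a, y ^ i) * (y - 1) := (geom_sum_mul y a).symm
  rw [ex, ey, exa, eya]
  have hpos : (0:ℝ) < (x - 1) * (y - 1) := mul_pos hx1 hy1
  nlinarith [mul_lt_mul_of_pos_left key hpos]

theorem stmt_11 (M m : ℕ) (hM : 3 ≤ M) (hm : 1 ≤ m) (hmM : m ≤ M - 2) :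
    StrictMonoOn
      (fun y : ℝ =>
        (1 / ((m : ℝ) + 1)) * ((M : ℝ) * y / ((M : ℝ) + y - 1)) *
          ((y ^ (M - 1) - 1) / (y ^ (M - m - 1) - 1)))
      (Set.Ioi 1) := by
  intro x hx y hy hxy
  simp only [Set.mem_Ioi] at hx hy
  have hx0 : (0:ℝ) < x := lt_trans one_pos hx
  have hy0 : (0:ℝ) < y := lt_trans one_pos hy
  have hM3 : (3:ℝ) ≤ (M:ℝ) := by exact_mod_cast hM
  set a := M - m - 1 with ha_def
  have ha : 1 ≤ a := by omega
  have hak : a + m = M - 1 := by omega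
  have hc : (0:ℝ) < 1 / ((m : ℝ) + 1) := by positivity
  -- first factor
  have hdx : (0:ℝ) < (M:ℝ) + x - 1 := by linarith
  have hdy : (0:ℝ) < (M:ℝ) + y - 1 := by linarith
  have hg : (M:ℝ) * x / ((M:ℝ) + x - 1) < (M:ℝ) * y / ((M:ℝ) + y - 1) := by
    rw [div_lt_div_iff₀ hdx hdy]
    have hMM : (0:ℝ) < (M:ℝ) * ((M:ℝ) - 1) := by nlinarith
    nlinarith [mul_lt_mul_of_pos_left hxy hMM]
  have hgpos : (0:ℝ) < (M:ℝ) * x / ((M:ℝ) + x - 1) := by positivity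
  -- second factor
  have hh : (x ^ (M - 1) - 1) / (x ^ a - 1) < (y ^ (M - 1) - 1) / (y ^ a - 1) := by
    rw [← hak]
    exact ratio_lt hx hxy ha hm
  have hhpos : (0:ℝ) < (x ^ (M - 1) - 1) / (x ^ a - 1) := by
    apply div_pos
    · exact sub_pos.2 (one_lt_pow₀ hx (by omega))
    · exact sub_pos.2 (one_lt_pow₀ hx (by omega))
  have hmain : (M:ℝ) * x / ((M:ℝ) + x - 1) * ((x ^ (M - 1) - 1) / (x ^ a - 1)) <
      (M:ℝ) * y / ((M:ℝ) + y - 1) * ((y ^ (M - 1) - 1) / (y ^ a - 1)) :=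
    mul_lt_mul'' hg hh (le_of_lt hgpos) (le_of_lt hhpos)
  simp only [mul_assoc]
  exact mul_lt_mul_of_pos_left hmain hc
end

section
/- Let N ≥ 2, M ≥ 3, and m with 1 ≤ m ≤ M - 2 be integers, let K be an integer with 1 ≤ K ≤ N and K/N ≤ 17/25, and set y = N/K. Then (m+1)(y^{M-m-1} - 1) < (M y/(M + y - 1))(y^{M-1} - 1). -/
lemma aux_pow_ge (y : ℝ) (hy : 25/17 ≤ y) (a : ℕ) (ha : 4 ≤ a) : (a:ℝ) + y - 1 ≤ y^a := by
  induction a, ha using Nat.le_induction with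
  | base => push_cast; nlinarith [sq_nonneg (y^2 - 2), sq_nonneg (y - 25/17)]
  | succ n hn ih =>
      have hy0 : (0:ℝ) < y := by linarith
      have hn4 : (4:ℝ) ≤ (n:ℝ) := by exact_mod_cast hn
      have h1 : y * ((n:ℝ) + y - 1) ≤ y * y^n := by
        apply mul_le_mul_of_nonneg_left ih hy0.le
      have h2 : y^(n+1) = y * y^n := by ring
      push_cast
      nlinarith [sq_nonneg (y - 1)]

lemma aux_a2 (M : ℕ) (y : ℝ) (hy : 25/17 ≤ y) (hM1 : 3 ≤ M) (hM2 : M ≤ 5) :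
    (2:ℝ) * (y^(M-2) - 1) * ((M:ℝ) + y - 1) < (M:ℝ) * y * (y^(M-1) - 1) := by
  interval_cases M <;> norm_num <;>
    nlinarith [sq_nonneg (y-1), sq_nonneg y, sq_nonneg (y^2-1), sq_nonneg (y-25/17),
      mul_nonneg (sub_nonneg.2 hy) (sq_nonneg y), sq_nonneg (y^2 - 2),
      mul_nonneg (mul_nonneg (sub_nonneg.2 hy) (sq_nonneg y)) (by linarith : (0:ℝ) ≤ y)]

lemma aux_a3 (M : ℕ) (y : ℝ) (hy : 25/17 ≤ y) (hM1 : 4 ≤ M) (hM2 : M ≤ 7) :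
    (3:ℝ) * (y^(M-3) - 1) * ((M:ℝ) + y - 1) < (M:ℝ) * y * (y^(M-1) - 1) := by
  have hy0 : (0:ℝ) ≤ y := by linarith
  interval_cases M <;> norm_num <;>
    nlinarith [sq_nonneg (y-1), sq_nonneg y, sq_nonneg (y^2-1), sq_nonneg (y-25/17),
      mul_nonneg (sub_nonneg.2 hy) (sq_nonneg y), sq_nonneg (y^2 - 2), sq_nonneg (y^3-1),
      mul_nonneg (mul_nonneg (sub_nonneg.2 hy) (sq_nonneg y)) hy0,
      mul_nonneg (mul_nonneg (sub_nonneg.2 hy) (sq_nonneg y)) (sq_nonneg y)]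

lemma aux_key (a M : ℕ) (y : ℝ) (hy : 25/17 ≤ y) (ha : 2 ≤ a) (haM : a + 1 ≤ M) :
    (a:ℝ) * (y^(M-a) - 1) * ((M:ℝ) + y - 1) < (M:ℝ) * y * (y^(M-1) - 1) := by
  have hy1 : (1:ℝ) < y := by linarith
  have hy0 : (0:ℝ) < y := by linarith
  have hMR : ((a:ℝ)+1) ≤ (M:ℝ) := by exact_mod_cast haM
  have haR : (2:ℝ) ≤ (a:ℝ) := by exact_mod_cast ha
  have hid : y^(M-1) = y^(a-1) * y^(M-a) := by
    rw [← pow_add]; congr 1; omega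
  have hida : y^a = y * y^(a-1) := by
    rw [← pow_succ']; congr 1; omega
  have hu : y ≤ y^(M-a) := by
    calc y = y^1 := (pow_one y).symm
    _ ≤ y^(M-a) := pow_le_pow_right₀ hy1.le (by omega)
  have hv : y ≤ y^(a-1) := by
    calc y = y^1 := (pow_one y).symm
    _ ≤ y^(a-1) := pow_le_pow_right₀ hy1.le (by omega)
  by_cases h : (a:ℝ) * (y - 1) ≤ (M:ℝ) * (y^a - a)
  · have h3 : 0 < y^(M-a) - 1 := by linarith
    have h4 : 0 ≤ (M:ℝ) * y * y^(a-1) - ((a:ℝ)*(M:ℝ) + (a:ℝ)*y - a) := by nlinarith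
    have h5 : 0 < (M:ℝ) * y * (y^(a-1) - 1) := by
      apply mul_pos (by nlinarith) (by linarith)
    nlinarith [mul_nonneg h3.le h4]
  · push_neg at h
    have ha4 : a < 4 := by
      by_contra hc
      push_neg at hc
      have := aux_pow_ge y hy a hc
      nlinarith
    interval_cases a
    · -- a = 2
      have hM6 : M ≤ 5 := by
        by_contra hc
        push_neg at hc
        have h6 : (6:ℝ) ≤ (M:ℝ) := by exact_mod_cast hc
        have hpos : (0:ℝ) < y^2 - 2 := by nlinarith [sq_nonneg (y - 25/17)]
        push_cast at h
        nlinarith [mul_le_mul_of_nonneg_right h6 hpos.le, sq_nonneg (y - 25/17)]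
      have := aux_a2 M y hy (by omega) hM6
      push_cast
      linarith
    · -- a = 3
      have hM8 : M ≤ 7 := by
        by_contra hc
        push_neg at hc
        have h8 : (8:ℝ) ≤ (M:ℝ) := by exact_mod_cast hc
        have hpos : (0:ℝ) < y^3 - 3 := by
          nlinarith [mul_nonneg (sub_nonneg.2 hy) (sq_nonneg y), sub_nonneg.2 hy, sq_nonneg (y-25/17)]
        push_cast at h
        nlinarith [mul_le_mul_of_nonneg_right h8 hpos.le,
          mul_nonneg (sub_nonneg.2 hy) (sq_nonneg y),
          mul_nonneg (sub_nonneg.2 hy) hy0.le, sub_nonneg.2 hy]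
      have := aux_a3 M y hy (by omega) hM8
      push_cast
      linarith

theorem stmt_13 (N K M m : ℕ) (hN : 2 ≤ N) (hM : 3 ≤ M) (hm : 1 ≤ m)
    (hmM : m ≤ M - 2) (hK1 : 1 ≤ K) (hKN : K ≤ N)
    (hrate : (K : ℝ) / N ≤ 17 / 25) :
    ((m : ℝ) + 1) * (((N : ℝ) / K) ^ (M - m - 1) - 1) <
      ((M : ℝ) * ((N : ℝ) / K) / ((M : ℝ) + (N : ℝ) / K - 1)) *
        (((N : ℝ) / K) ^ (M - 1) - 1) := by
  have hK0 : (0:ℝ) < K := by exact_mod_cast hK1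
  have hN0 : (0:ℝ) < N := by positivity
  set y : ℝ := (N:ℝ)/K with hydef
  have hy : 25/17 ≤ y := by
    rw [div_le_div_iff₀ hN0 (by norm_num)] at hrate
    rw [hydef, le_div_iff₀ hK0]
    linarith
  have hM3 : (3:ℝ) ≤ (M:ℝ) := by exact_mod_cast hM
  have hy0 : (0:ℝ) < y := by linarith
  have hden : 0 < (M:ℝ) + y - 1 := by linarith
  rw [div_mul_eq_mul_div, lt_div_iff₀ hden]
  have key := aux_key (m+1) M y hy (by omega) (by omega)
  have hsub : M - (m+1) = M - m - 1 := by omega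
  rw [hsub] at key
  push_cast at key
  linarith [key]
end

section
/- Let N ≥ 2 and M ≥ 3 be integers and let m' be an integer with 1 ≤ m' ≤ M - 2. Then (1/N^{m'+1} - 1/N^M) < (1 - log(m'+1)/log M) · (1/N - 1/N^M), where log is taken in any fixed base greater than 1. -/
/-!
Put `x = 1/N ≤ 1/2` and `S n = ∑_{i<n} xⁱ`. Then
`1/N^(m'+1) - 1/N^M = x (1 - x) (S (M-1) - S m')` and `1/N - 1/N^M = x (1 - x) S (M-1)`,
so the claim amounts to `log (m'+1) / S m' < log M / S (M-1)`: the map `n ↦ log (n+1) / S n`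
is strictly increasing on `n ≥ 1`. Its one-step increase reduces, via `S n ≥ 1` and
`xⁿ ≤ 2⁻ⁿ`, to `log (n+1) < 2ⁿ (log (n+2) - log (n+1))`.
-/

open Finset Real

lemma mul_add_two_lt_two_pow {a : ℕ} (ha : 6 ≤ a) : a * (a + 2) < 2 ^ a := by
  induction a, ha using Nat.le_induction with
  | base => norm_num
  | succ a _ ih => rw [pow_succ]; nlinarith

lemma log_succ_lt_two_pow_mul_log_sub {a : ℕ} (ha : 1 ≤ a) :
    log (a + 1) < 2 ^ a * (log (a + 2) - log (a + 1)) := by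
  rcases lt_or_ge a 6 with hsmall | hlarge
  · have hpow : ((a : ℝ) + 1) ^ (2 ^ a + 1) < ((a : ℝ) + 2) ^ 2 ^ a := by
      interval_cases a <;> norm_num
    have hlog := log_lt_log (by positivity) hpow
    rw [log_pow, log_pow] at hlog
    push_cast at hlog
    linarith
  · have hlog : log (a + 1) ≤ a := by
      linarith [log_le_sub_one_of_pos (x := a + 1) (by positivity)]
    have hgap : 1 / (a + 2) ≤ log (a + 2) - log (a + 1) := by
      rw [← log_div (by positivity) (by positivity)]
      convert one_sub_inv_le_log_of_pos (x := (a + 2) / (a + 1)) (by positivity) using 1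
      field_simp
      ring
    have hpow : (a : ℝ) * (a + 2) < 2 ^ a := by exact_mod_cast mul_add_two_lt_two_pow hlarge
    calc log (a + 1) ≤ a := hlog
      _ < 2 ^ a * (1 / (a + 2)) := by rw [mul_one_div, lt_div_iff₀ (by positivity)]; exact hpow
      _ ≤ 2 ^ a * (log (a + 2) - log (a + 1)) := by gcongr

section GeomSum

variable {x : ℝ}

lemma one_le_geom_sum (hx : 0 ≤ x) {n : ℕ} (hn : 1 ≤ n) : 1 ≤ ∑ i ∈ range n, x ^ i := by
  simpa using single_le_sum (f := (x ^ ·)) (fun i _ => by positivity) (mem_range.2 hn)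

lemma strictMonoOn_log_succ_div_geom_sum (hx₀ : 0 < x) (hx : x ≤ 1 / 2) :
    StrictMonoOn (fun n : ℕ => log (n + 1) / ∑ i ∈ range n, x ^ i) (Set.Ici 1) := by
  refine strictMonoOn_of_lt_add_one Set.ordConnected_Ici fun a _ ha _ => ?_
  rw [Set.mem_Ici] at ha
  have hS := one_le_geom_sum hx₀.le ha
  have hLa : 0 ≤ log (a + 1) := log_nonneg (by linarith [(Nat.one_le_cast (α := ℝ)).2 ha])
  have hstep := log_succ_lt_two_pow_mul_log_sub ha
  have hxa : x ^ a ≤ (2 ^ a)⁻¹ := by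
    rw [← inv_pow, ← one_div]; exact pow_le_pow_left₀ hx₀.le hx a
  have htail : log (a + 1) * x ^ a < log (a + 2) - log (a + 1) :=
    calc log (a + 1) * x ^ a ≤ log (a + 1) / 2 ^ a := by rw [div_eq_mul_inv]; gcongr
      _ < log (a + 2) - log (a + 1) := by rw [div_lt_iff₀' (by positivity)]; exact hstep
  have hgap :
      log (a + 2) - log (a + 1) ≤ (log (a + 2) - log (a + 1)) * ∑ i ∈ range a, x ^ i :=
    le_mul_of_one_le_right ((mul_nonneg hLa (by positivity)).trans htail.le) hS
  rw [div_lt_div_iff₀ (by positivity) (by positivity), sum_range_succ]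
  push_cast
  rw [show (a : ℝ) + 1 + 1 = a + 2 by ring]
  linarith

theorem pow_succ_sub_pow_succ_lt (hx₀ : 0 < x) (hx : x ≤ 1 / 2) {a c : ℕ} (ha : 1 ≤ a)
    (hac : a < c) :
    x ^ (a + 1) - x ^ (c + 1) < (1 - log (a + 1) / log (c + 1)) * (x - x ^ (c + 1)) := by
  have hc : 1 ≤ c := ha.trans hac.le
  have hmono :=
    strictMonoOn_log_succ_div_geom_sum hx₀ hx (Set.mem_Ici.2 ha) (Set.mem_Ici.2 hc) hac
  have hSa := one_le_geom_sum hx₀.le ha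
  have hSc := one_le_geom_sum hx₀.le hc
  have hLc : 0 < log (c + 1) := log_pos (by linarith [(Nat.one_le_cast (α := ℝ)).2 hc])
  have hratio :
      log (a + 1) / log (c + 1) * ∑ i ∈ range c, x ^ i < ∑ i ∈ range a, x ^ i := by
    rw [div_lt_div_iff₀ (by linarith) (by linarith)] at hmono
    rw [div_mul_eq_mul_div, div_lt_iff₀ hLc]
    linarith
  have hpow (n : ℕ) : x ^ (n + 1) = x - x * (1 - x) * ∑ i ∈ range n, x ^ i := by
    linear_combination x * geom_sum_mul_neg x n
  rw [hpow a, hpow c]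
  linarith [mul_lt_mul_of_pos_left hratio (mul_pos hx₀ (by linarith) : 0 < x * (1 - x))]

end GeomSum

theorem stmt_15_general (N M m' : ℕ) (hN : 2 ≤ N) (hm : 1 ≤ m')
    (hmM : m' ≤ M - 2) (b : ℝ) (hb : 1 < b) :
    1 / (N : ℝ) ^ (m' + 1) - 1 / (N : ℝ) ^ M <
      (1 - Real.logb b ((m' : ℝ) + 1) / Real.logb b M) *
        (1 / (N : ℝ) - 1 / (N : ℝ) ^ M) := by
  obtain ⟨c, rfl⟩ : ∃ c, M = c + 1 := ⟨M - 1, by omega⟩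
  have hx : (N : ℝ)⁻¹ ≤ 1 / 2 := by
    rw [one_div]; gcongr; exact_mod_cast hN
  have hlogb : logb b (m' + 1) / logb b ((c + 1 : ℕ) : ℝ) = log (m' + 1) / log (c + 1) := by
    push_cast
    exact div_div_div_cancel_right₀ (log_pos hb).ne' _ _
  rw [hlogb]
  simp only [one_div, ← inv_pow]
  exact pow_succ_sub_pow_succ_lt (by positivity) hx hm (by omega)

theorem stmt_15 (N M m' : ℕ) (hN : 2 ≤ N) (hM : 3 ≤ M) (hm : 1 ≤ m')
    (hmM : m' ≤ M - 2) (b : ℝ) (hb : 1 < b) :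
    1 / (N : ℝ) ^ (m' + 1) - 1 / (N : ℝ) ^ M <
      (1 - Real.logb b ((m' : ℝ) + 1) / Real.logb b M) *
        (1 / (N : ℝ) - 1 / (N : ℝ) ^ M) :=
  stmt_15_general N M m' hN hm hmM b hb
end

section
/- For all integers N ≥ 2, M ≥ 3, and m' with 1 ≤ m' ≤ M - 2, one has (1 - N^{-m'})/(1 - N^{-(M-1)}) > ln(m'+1)/ln(M). -/
/-!
With `x = 1/N ≤ 1/2` the claim says that `k ↦ log (k + 1) / (1 - x ^ k)` is strictly increasing
for `k ≥ 1`. The step from `k` to `k + 1` reduces to `x ^ k * log (k + 1) < log ((k + 2) / (k + 1))`,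
which follows from `x ^ k ≤ 2⁻ᵏ` and `log (k + 1) < 2 ^ k * log ((k + 2) / (k + 1))`. The latter is
checked exactly for `k = 1, 2`; for `k ≥ 3` it follows from `log ((k + 2) / (k + 1)) ≥ 1 / (k + 2)`
and `log (k + 1) ≤ (k + 1) / e`.
-/

open Real

lemma log_le_div_exp_one {y : ℝ} (hy : 0 < y) : log y ≤ y / exp 1 := by
  have h := log_le_sub_one_of_pos (div_pos hy (exp_pos 1))
  rw [log_div hy.ne' (exp_pos 1).ne', log_exp] at h
  linarith

lemma two_mul_succ_mul_add_two_le_five_mul_two_pow {k : ℕ} (hk : 3 ≤ k) :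
    2 * ((k + 1) * (k + 2)) ≤ 5 * 2 ^ k := by
  induction k, hk using Nat.le_induction with
  | base => norm_num
  | succ k hk ih => rw [pow_succ]; nlinarith

lemma add_two_mul_log_succ_lt_two_pow {k : ℕ} (hk : 3 ≤ k) :
    ((k : ℝ) + 2) * log ((k : ℝ) + 1) < 2 ^ k := by
  have hpoly : 2 * (((k : ℝ) + 1) * ((k : ℝ) + 2)) ≤ 5 * 2 ^ k := by
    exact_mod_cast two_mul_succ_mul_add_two_le_five_mul_two_pow hk
  have he : (5 : ℝ) / 2 < exp 1 := lt_trans (by norm_num) exp_one_gt_d9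
  calc ((k : ℝ) + 2) * log ((k : ℝ) + 1)
      ≤ ((k : ℝ) + 2) * (((k : ℝ) + 1) / exp 1) := by
        gcongr; exact log_le_div_exp_one (by positivity)
    _ < ((k : ℝ) + 2) * (((k : ℝ) + 1) / (5 / 2)) := by gcongr
    _ ≤ 2 ^ k := by linarith

lemma log_succ_lt_two_pow_mul_sub_log {k : ℕ} (hk : 1 ≤ k) :
    log ((k : ℝ) + 1) < 2 ^ k * (log ((k : ℝ) + 2) - log ((k : ℝ) + 1)) := by
  rw [← log_div (by positivity) (by positivity)]
  rcases lt_or_ge k 3 with hk3 | hk3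
  · interval_cases k
    · calc log ((1 : ℕ) + 1 : ℝ) < log ((3 / 2) ^ 2) := log_lt_log (by norm_num) (by norm_num)
        _ = _ := by rw [log_pow]; norm_num
    · calc log ((2 : ℕ) + 1 : ℝ) < log ((4 / 3) ^ 4) := log_lt_log (by norm_num) (by norm_num)
        _ = _ := by rw [log_pow]; norm_num
  · have hinv : ((k : ℝ) + 2)⁻¹ ≤ log (((k : ℝ) + 2) / ((k : ℝ) + 1)) := by
      have h := one_sub_inv_le_log_of_pos (show 0 < ((k : ℝ) + 2) / ((k : ℝ) + 1) by positivity)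
      rw [inv_div, one_sub_div (by positivity), add_sub_add_left_eq_sub] at h
      norm_num at h
      exact h
    calc log ((k : ℝ) + 1) < 2 ^ k * ((k : ℝ) + 2)⁻¹ := by
          rw [← div_eq_mul_inv, lt_div_iff₀ (by positivity), mul_comm]
          exact add_two_mul_log_succ_lt_two_pow hk3
      _ ≤ _ := by gcongr

lemma one_sub_pow_succ_mul_log_lt {x : ℝ} (hx0 : 0 ≤ x) (hx : x ≤ 1 / 2) {k : ℕ} (hk : 1 ≤ k) :
    (1 - x ^ (k + 1)) * log ((k : ℝ) + 1) < (1 - x ^ k) * log ((k : ℝ) + 2) := by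
  have hL : 0 ≤ log ((k : ℝ) + 1) := log_nonneg (by linarith)
  have hδ := log_succ_lt_two_pow_mul_sub_log hk
  have hδ_pos : 0 < log ((k : ℝ) + 2) - log ((k : ℝ) + 1) := by
    nlinarith [pow_pos (two_pos : (0 : ℝ) < 2) k]
  have key : x ^ k * log ((k : ℝ) + 1) < log ((k : ℝ) + 2) - log ((k : ℝ) + 1) :=
    calc x ^ k * log ((k : ℝ) + 1) ≤ (1 / 2) ^ k * log ((k : ℝ) + 1) := by gcongr
      _ < (1 / 2) ^ k * (2 ^ k * (log ((k : ℝ) + 2) - log ((k : ℝ) + 1))) := by gcongr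
      _ = _ := by rw [← mul_assoc, ← mul_pow]; norm_num
  have hxk : x ^ k ≤ x := pow_le_of_le_one hx0 (by linarith) (by omega)
  rw [pow_succ]
  nlinarith [mul_lt_mul_of_pos_left key (by linarith : 0 < 1 - x),
    mul_le_mul_of_nonneg_right (by linarith : 1 - x ≤ 1 - x ^ k) hδ_pos.le]

lemma one_sub_pow_succ_pos {x : ℝ} (hx0 : 0 ≤ x) (hx1 : x < 1) (k : ℕ) :
    0 < 1 - x ^ (k + 1) :=
  sub_pos.2 (pow_lt_one₀ hx0 hx1 k.succ_ne_zero)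

lemma strictMono_log_div_one_sub_pow {x : ℝ} (hx0 : 0 ≤ x) (hx : x ≤ 1 / 2) :
    StrictMono fun n : ℕ ↦ log ((n : ℝ) + 2) / (1 - x ^ (n + 1)) := by
  refine strictMono_nat_of_lt_succ fun n ↦ ?_
  have hpos := one_sub_pow_succ_pos hx0 (hx.trans_lt (by norm_num))
  rw [div_lt_div_iff₀ (hpos n) (hpos (n + 1))]
  have h := one_sub_pow_succ_mul_log_lt hx0 hx (k := n + 1) (by omega)
  push_cast at h ⊢
  rw [show (n : ℝ) + 1 + 1 = n + 2 by ring] at h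
  linarith

lemma log_div_log_lt_one_sub_pow_div {x : ℝ} (hx0 : 0 ≤ x) (hx : x ≤ 1 / 2) {a b : ℕ}
    (ha : 1 ≤ a) (hab : a < b) :
    log ((a : ℝ) + 1) / log ((b : ℝ) + 1) < (1 - x ^ a) / (1 - x ^ b) := by
  obtain ⟨m, rfl⟩ := Nat.exists_eq_add_of_le' ha
  obtain ⟨n, rfl⟩ := Nat.exists_eq_add_of_lt hab
  have h := strictMono_log_div_one_sub_pow hx0 hx (show m < m + n + 1 by omega)
  have hpos := one_sub_pow_succ_pos hx0 (hx.trans_lt (by norm_num))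
  rw [div_lt_div_iff₀ (hpos _) (hpos _)] at h
  rw [div_lt_div_iff₀ (log_pos (by push_cast; linarith)) (hpos _)]
  push_cast at h ⊢
  ring_nf at h ⊢
  linarith

theorem stmt_16_general (N M m' : ℕ) (hN : 2 ≤ N) (hm : 1 ≤ m')
    (hmM : m' ≤ M - 2) :
    (1 - 1 / (N : ℝ) ^ m') / (1 - 1 / (N : ℝ) ^ (M - 1)) >
      Real.log ((m' : ℝ) + 1) / Real.log M := by
  have hx : (N : ℝ)⁻¹ ≤ 1 / 2 := by
    rw [one_div]; exact inv_anti₀ two_pos (by exact_mod_cast hN)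
  have hM : ((M - 1 : ℕ) : ℝ) + 1 = M := by
    rw [Nat.cast_sub (by omega)]; ring
  simpa only [hM, one_div, inv_pow] using
    log_div_log_lt_one_sub_pow_div (inv_nonneg.2 (N.cast_nonneg)) hx hm (by omega : m' < M - 1)

theorem stmt_16 (N M m' : ℕ) (hN : 2 ≤ N) (hM : 3 ≤ M) (hm : 1 ≤ m')
    (hmM : m' ≤ M - 2) :
    (1 - 1 / (N : ℝ) ^ m') / (1 - 1 / (N : ℝ) ^ (M - 1)) >
      Real.log ((m' : ℝ) + 1) / Real.log M :=
  stmt_16_general N M m' hN hm hmM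
end

section
/- Let q be a real number with 0 < q ≤ 0.7828, let M ≥ 6 be an integer and m' an integer with 6 ≤ m' ≤ M - 2. Then q(1 - (1 - q^{m'})/(1 - q^{M-1})) < 1 - ln(m'+1)/ln(M). -/
/-!
Write n = m' + 1 and k = M - n ≥ 1. The left side is q^n (1 - q^k) / (1 - q^(M-1)); since
(n + k) c^k ≤ n for c = 0.7828 and n ≥ 7, the numerator increases with q on [0, c], so it
suffices to treat q = c. Then 1 - c^k ≤ 2tk / (1 + tk) with t = (1 - c)/(1 + c), while
log (M/n) ≥ 2k/(M + n) bounds the right side below by 2k / (2k + (2n + k) log n). Both bounds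
are ratios of affine functions of k, so comparing them only requires c^n n log n and
c^n (log n + 2) to be small, which holds at n = 7 and persists since c^n n log n decreases in n.
-/

open Real Set

-- `(1 - c^k)/(1 + c^k) ≤ k (1 - c)/(1 + c)` is `tanh (k x) ≤ k tanh x` for `c = exp (-2x)`,
-- which follows from the subadditivity of `tanh` on `[0, ∞)`.
lemma one_sub_pow_mul_one_add_le {c : ℝ} (hc0 : 0 ≤ c) (hc1 : c ≤ 1) (k : ℕ) :
    (1 - c ^ k) * (1 + c) ≤ k * (1 - c) * (1 + c ^ k) := by
  induction k with
  | zero => simp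
  | succ k ih =>
    have hx1 : c ^ k ≤ 1 := pow_le_one₀ hc0 hc1
    have hcx : c * c ^ k ≤ 1 := by nlinarith
    have hprod : 2 * c * (1 - c ^ k) * (1 + c ^ k) ≤ k * (1 - c) * (1 + c * c ^ k) * (1 + c ^ k) := by
      nlinarith [mul_le_mul_of_nonneg_right ih (by positivity : 0 ≤ 1 + c * c ^ k),
        mul_nonneg (mul_nonneg (sub_nonneg.2 hx1) (sub_nonneg.2 hc1)) (sub_nonneg.2 hcx)]
    have hstep : 2 * c * (1 - c ^ k) ≤ k * (1 - c) * (1 + c * c ^ k) :=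
      le_of_mul_le_mul_right (by linarith) (by positivity : (0:ℝ) < 1 + c ^ k)
    rw [pow_succ']
    push_cast
    nlinarith

lemma add_mul_pow_le {c : ℝ} {n : ℕ} (hc : 0 ≤ c) (h : (n + 1) * c ≤ n) (k : ℕ) :
    (n + k) * c ^ k ≤ n := by
  induction k with
  | zero => simp
  | succ k ih =>
    have hc1 : c ≤ 1 := by nlinarith
    have : ((n : ℝ) + (k + 1 : ℕ)) * c ≤ n + k := by push_cast; nlinarith
    calc ((n : ℝ) + (k + 1 : ℕ)) * c ^ (k + 1) = ((n + (k + 1 : ℕ)) * c) * c ^ k := by ring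
      _ ≤ (n + k) * c ^ k := by gcongr
      _ ≤ n := ih

lemma monotoneOn_pow_sub_pow_add {c : ℝ} {n : ℕ} (h : (n + 1) * c ≤ n) (k : ℕ) :
    MonotoneOn (fun t : ℝ => t ^ n - t ^ (n + k)) (Icc 0 c) := by
  refine monotoneOn_of_deriv_nonneg (convex_Icc 0 c) (by fun_prop) (by fun_prop) ?_
  rw [interior_Icc]
  rintro t ⟨ht0, htc⟩
  obtain _ | n := n
  · push_cast at h; linarith
  have hpow : ((n + 1 + k : ℕ) : ℝ) * t ^ k ≤ n + 1 := by
    calc ((n + 1 + k : ℕ) : ℝ) * t ^ k ≤ ((n + 1 : ℕ) + k) * c ^ k := by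
          push_cast; gcongr
      _ ≤ (n + 1 : ℕ) := add_mul_pow_le (ht0.trans htc).le h k
      _ = n + 1 := by push_cast; ring
  have hd : deriv (fun t : ℝ => t ^ (n + 1) - t ^ (n + 1 + k)) t
      = t ^ n * ((n + 1 : ℝ) - (n + 1 + k : ℕ) * t ^ k) := by
    rw [deriv_fun_sub (differentiableAt_pow _) (differentiableAt_pow _), deriv_pow_field,
      deriv_pow_field, Nat.add_sub_cancel, show n + 1 + k - 1 = n + k by omega, pow_add]
    push_cast; ring
  rw [hd]
  exact mul_nonneg (pow_nonneg ht0.le n) (sub_nonneg.2 hpow)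

lemma two_mul_sub_div_add_le_log_div {x y : ℝ} (hx : 0 < x) (hxy : x ≤ y) :
    2 * (y - x) / (y + x) ≤ log (y / x) := by
  have h := sum_range_le_log_div (x := (y - x) / (y + x)) (div_nonneg (by linarith) (by linarith))
    ((div_lt_one (by linarith)).2 (by linarith)) 1
  have he : (1 + (y - x) / (y + x)) / (1 - (y - x) / (y + x)) = y / x := by
    have : y + x ≠ 0 := by linarith
    field_simp [hx.ne']
    ring
  rw [he] at h
  simp only [Finset.range_one, Finset.sum_singleton] at h
  norm_num at h
  rw [mul_div_assoc]
  linarith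

lemma pow_mul_mul_log_le {c : ℝ} (hc0 : 0 ≤ c) (hc : c ≤ 4 / 5) {n : ℕ} (hn : 7 ≤ n) :
    c ^ n * (n * log n) ≤ c ^ 7 * (7 * log 7) := by
  have hlog7 : 1.73 ≤ log 7 := by
    have h : log (2 ^ 5) ≤ log (7 ^ 2) := log_le_log (by norm_num) (by norm_num)
    rw [log_pow, log_pow] at h
    push_cast at h
    linarith [log_two_gt_d9]
  induction n, hn using Nat.le_induction with
  | base => norm_num
  | succ n hn ih =>
    have hnR : (7 : ℝ) ≤ n := by exact_mod_cast hn
    have hlogn : 1.73 ≤ log n := hlog7.trans (log_le_log (by norm_num) hnR)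
    have hlog_succ : log (n + 1) ≤ log n + 1 / n := by
      have h := log_le_sub_one_of_pos (show (0 : ℝ) < (n + 1) / n by positivity)
      rw [log_div (by positivity) (by positivity)] at h
      have : ((n : ℝ) + 1) / n - 1 = 1 / n := by field_simp; ring
      linarith
    have hstep : c * ((n + 1) * log (n + 1)) ≤ n * log n := by
      have h1 : ((n : ℝ) + 1) * log (n + 1) ≤ (n + 1) * log n + (n + 1) / n := by
        have := mul_le_mul_of_nonneg_left hlog_succ (by positivity : (0 : ℝ) ≤ n + 1)
        rw [mul_add, mul_one_div] at this
        exact this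
      have h2 : ((n : ℝ) + 1) / n ≤ 8 / 7 := by
        rw [div_le_iff₀ (by positivity)]; linarith
      have h3 : 0 ≤ ((n : ℝ) + 1) * log (n + 1) :=
        mul_nonneg (by positivity) (log_nonneg (by linarith))
      nlinarith
    push_cast
    calc c ^ (n + 1) * ((n + 1) * log (n + 1)) = c ^ n * (c * ((n + 1) * log (n + 1))) := by ring
      _ ≤ c ^ n * (n * log n) := by gcongr
      _ ≤ c ^ 7 * (7 * log 7) := ih

lemma log_seven_lt : log 7 < 2.0795 := by
  have h : log 7 < log (2 ^ 3) := log_lt_log (by norm_num) (by norm_num)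
  rw [log_pow] at h
  push_cast at h
  linarith [log_two_lt_d9]

lemma div_le_one_sub_log_div_log {n M : ℝ} (hn : 1 ≤ n) (hnM : n < M) :
    2 * (M - n) / (2 * (M - n) + log n * (M + n)) ≤ 1 - log n / log M := by
  have hL : 0 ≤ log n := log_nonneg hn
  have hy : 2 * (M - n) / (M + n) ≤ log M - log n := by
    rw [← log_div (by linarith) (by linarith)]
    exact two_mul_sub_div_add_le_log_div (by linarith) hnM.le
  have hlogM : 0 < log M := log_pos (by linarith)
  have hMn : 0 < M + n := by linarith
  rw [div_le_iff₀ hMn] at hy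
  rw [div_le_iff₀ (by nlinarith), one_sub_div hlogM.ne', div_mul_eq_mul_div, le_div_iff₀ hlogM]
  nlinarith

lemma pow_sub_pow_add_div_lt {n k : ℕ} (hn : 7 ≤ n) (hk : 1 ≤ k) :
    ((0.7828 : ℝ) ^ n - 0.7828 ^ (n + k)) / (1 - 0.7828 ^ 7) <
      2 * k / (2 * k + log n * (2 * n + k)) := by
  have hnR : (7 : ℝ) ≤ n := by exact_mod_cast hn
  have hL : 0 ≤ log n := log_nonneg (by linarith)
  have hnL := pow_mul_mul_log_le (c := 0.7828) (by norm_num) (by norm_num) hn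
  have hx := one_sub_pow_mul_one_add_le (c := 0.7828) (by norm_num) (by norm_num) k
  have ha0 : (0 : ℝ) ≤ 0.7828 ^ n := by positivity
  have ha7 : (0.7828 : ℝ) ^ n ≤ 0.7828 ^ 7 := pow_le_pow_of_le_one (by norm_num) (by norm_num) hn
  have hc : (0 : ℝ) < 0.7828 ∧ (0 : ℝ) < 1 - 0.7828 ∧ (0 : ℝ) < 1 - 0.7828 ^ 7 := by norm_num
  have h_const :
      2 * (1 - 0.7828) * (0.7828 ^ 7 * (7 * 2.0795)) < (1 - 0.7828 ^ 7) * (1 + 0.7828 : ℝ) := by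
    norm_num
  have h_lin : (0.7828 : ℝ) ^ 7 * (2.0795 + 3) ≤ 1 := by norm_num
  have hlog7 := log_seven_lt
  rw [pow_add]
  generalize (0.7828 : ℝ) = c at *
  generalize c ^ n = a at *
  generalize c ^ k = y at *
  generalize log n = L at *
  obtain ⟨hc0, hs, hD⟩ := hc
  have haL : a * (n * L) < c ^ 7 * (7 * 2.0795) :=
    hnL.trans_lt (by gcongr)
  have h_quad : 2 * (1 - c) * a * n * L < (1 - c ^ 7) * (1 + c) := by
    nlinarith [mul_lt_mul_of_pos_left haL (by positivity : 0 < 2 * (1 - c))]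
  have h_lin' : a * (L + 2) ≤ 1 - c ^ 7 := by
    have : 7 * (a * L) ≤ n * (a * L) := by gcongr
    nlinarith
  have hp : 0 < 1 + c + k * (1 - c) := by nlinarith
  -- Multiplying out, the constant and the `k`-coefficient are compared separately.
  rw [div_lt_div_iff₀ hD (by positivity)]
  refine lt_of_mul_lt_mul_right ?_ hp.le
  calc (a - a * y) * (2 * k + L * (2 * n + k)) * (1 + c + k * (1 - c))
      ≤ 2 * k * (1 - c) * (a * (2 * k + L * (2 * n + k))) := by
        have := mul_le_mul_of_nonneg_left hx (by positivity : 0 ≤ a * (2 * k + L * (2 * n + k)))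
        nlinarith
    _ = 2 * k * (2 * (1 - c) * a * n * L + k * (1 - c) * (a * (L + 2))) := by ring
    _ < 2 * k * ((1 - c ^ 7) * (1 + c) + k * (1 - c) * (1 - c ^ 7)) := by
        gcongr 2 * k * ?_
        exact add_lt_add_of_lt_of_le h_quad (by gcongr)
    _ = 2 * k * (1 - c ^ 7) * (1 + c + k * (1 - c)) := by ring

lemma mul_one_sub_one_sub_pow_div {q : ℝ} {a b : ℕ} (h : 1 - q ^ b ≠ 0) :
    q * (1 - (1 - q ^ a) / (1 - q ^ b)) = (q ^ (a + 1) - q ^ (b + 1)) / (1 - q ^ b) := by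
  field_simp
  ring

theorem stmt_17_general (q : ℝ) (hq0 : 0 < q) (hq : q ≤ 0.7828) (M m' : ℕ)
    (hm : 6 ≤ m') (hmM : m' ≤ M - 2) :
    q * (1 - (1 - q ^ m') / (1 - q ^ (M - 1))) <
      1 - Real.log ((m' : ℝ) + 1) / Real.log M := by
  obtain ⟨k, hk, rfl⟩ : ∃ k, 1 ≤ k ∧ M = m' + 1 + k := ⟨M - (m' + 1), by omega, by omega⟩
  have hden : 1 - 0.7828 ^ 7 ≤ 1 - q ^ (m' + 1 + k - 1) := by
    have h1 : q ^ (m' + 1 + k - 1) ≤ 0.7828 ^ (m' + 1 + k - 1) := pow_le_pow_left₀ hq0.le hq _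
    have h2 : (0.7828 : ℝ) ^ (m' + 1 + k - 1) ≤ 0.7828 ^ 7 :=
      pow_le_pow_of_le_one (by norm_num) (by norm_num) (by omega)
    linarith
  have hnum : q ^ (m' + 1) - q ^ (m' + 1 + k) ≤ 0.7828 ^ (m' + 1) - 0.7828 ^ (m' + 1 + k) := by
    have hmR : (6 : ℝ) ≤ m' := by exact_mod_cast hm
    exact monotoneOn_pow_sub_pow_add (by push_cast; linarith) k ⟨hq0.le, hq⟩
      ⟨by norm_num, le_rfl⟩ hq
  have hnum0 : (0 : ℝ) ≤ 0.7828 ^ (m' + 1) - 0.7828 ^ (m' + 1 + k) :=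
    sub_nonneg.2 (pow_le_pow_of_le_one (by norm_num) (by norm_num) (by omega))
  rw [mul_one_sub_one_sub_pow_div (lt_of_lt_of_le (by norm_num) hden).ne',
    Nat.sub_add_cancel (by omega)]
  calc _ ≤ ((0.7828 : ℝ) ^ (m' + 1) - 0.7828 ^ (m' + 1 + k)) / (1 - 0.7828 ^ 7) :=
        div_le_div₀ hnum0 hnum (by norm_num) hden
    _ < 2 * k / (2 * k + log (m' + 1 : ℕ) * (2 * (m' + 1 : ℕ) + k)) :=
        pow_sub_pow_add_div_lt (by omega) hk
    _ ≤ 1 - log ((m' : ℝ) + 1) / log (m' + 1 + k : ℕ) := by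
        have h := div_le_one_sub_log_div_log (n := m' + 1) (M := m' + 1 + k) (by linarith)
          (by exact_mod_cast (by omega : m' + 1 < m' + 1 + k))
        push_cast at h ⊢
        convert h using 3 <;> ring

theorem stmt_17 (q : ℝ) (hq0 : 0 < q) (hq : q ≤ 0.7828) (M m' : ℕ)
    (hM : 6 ≤ M) (hm : 6 ≤ m') (hmM : m' ≤ M - 2) :
    q * (1 - (1 - q ^ m') / (1 - q ^ (M - 1))) <
      1 - Real.log ((m' : ℝ) + 1) / Real.log M :=
  stmt_17_general q hq0 hq M m' hm hmM
end
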